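/- arXiv:1312.5112 — 5 statements merged into one kernel-verified Lean document; each statement's English description precedes it below -/
import Mathlib

section
/- For all real θx, θy, the function R(θx,θy) = 2(8 + cos θx + cos θy − cos θx cos θy) cos(θx/2) cos(θy/2) / √((5+cos θx)(2+cos θx)(5+cos θy)(2+cos θy)) satisfies |R(θx,θy)| ≤ 1. -/
noncomputable def Rfun (θx θy : ℝ) : ℝ :=
  2 * (8 + Real.cos θx + Real.cos θy - Real.cos θx * Real.cos θy) *
      Real.cos (θx / 2) * Real.cos (θy / 2) /
    Real.sqrt ((5 + Real.cos θx) * (2 + Real.cos θx) * (5 + Real.cos θy) * (2 + Real.cos θy))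

lemma key_poly (a b : ℝ) (ha0 : 0 ≤ a) (ha1 : a ≤ 1) (hb0 : 0 ≤ b) (hb1 : b ≤ 1) :
    4*a*b*(5+4*a+4*b-4*a*b)^2 ≤ (4+10*a+4*a^2)*(4+10*b+4*b^2) := by
  have h1 : 0 ≤ (1-a)*(1-b)*(16+56*(a+b)) := by
    apply mul_nonneg (mul_nonneg (by linarith) (by linarith)); nlinarith
  have h2 : 0 ≤ (1-a)*(1-b)*(a*b)*(240+64*a+64*b-64*a*b) := by
    apply mul_nonneg (mul_nonneg (mul_nonneg (by linarith) (by linarith)) (mul_nonneg ha0 hb0))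
    nlinarith [mul_nonneg ha0 (sub_nonneg.2 hb1)]
  nlinarith [sq_nonneg (a-b), h1, h2]

theorem Rfun_abs_le_one : ∀ θx θy : ℝ, |Rfun θx θy| ≤ 1 := by
  intro θx θy
  unfold Rfun
  set cx := Real.cos θx with hcx
  set cy := Real.cos θy with hcy
  set x := Real.cos (θx/2) with hx
  set y := Real.cos (θy/2) with hy
  have hcx1 : -1 ≤ cx := Real.neg_one_le_cos θx
  have hcy1 : -1 ≤ cy := Real.neg_one_le_cos θy
  have hD : (0:ℝ) < (5 + cx) * (2 + cx) * (5 + cy) * (2 + cy) :=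
    mul_pos (mul_pos (mul_pos (by linarith) (by linarith)) (by linarith)) (by linarith)
  have hsq : 0 < Real.sqrt ((5 + cx) * (2 + cx) * (5 + cy) * (2 + cy)) :=
    Real.sqrt_pos.2 hD
  rw [abs_div, abs_of_pos hsq, div_le_one hsq]
  have hxcx : cx = 2 * x^2 - 1 := by
    have h := Real.cos_two_mul (θx/2)
    rw [show 2*(θx/2) = θx by ring] at h
    rw [hcx, hx, h]
  have hycy : cy = 2 * y^2 - 1 := by
    have h := Real.cos_two_mul (θy/2)
    rw [show 2*(θy/2) = θy by ring] at h
    rw [hcy, hy, h]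
  have hx1 : x^2 ≤ 1 := by
    have := Real.neg_one_le_cos (θx/2); have := Real.cos_le_one (θx/2)
    nlinarith
  have hy1 : y^2 ≤ 1 := by
    have := Real.neg_one_le_cos (θy/2); have := Real.cos_le_one (θy/2)
    nlinarith
  have hnum : (2 * (8 + cx + cy - cx * cy) * x * y)^2 ≤
      (5 + cx) * (2 + cx) * (5 + cy) * (2 + cy) := by
    have hk := key_poly (x^2) (y^2) (sq_nonneg x) hx1 (sq_nonneg y) hy1
    rw [hxcx, hycy]
    nlinarith [hk]
  calc |2 * (8 + cx + cy - cx * cy) * x * y|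
      = Real.sqrt ((2 * (8 + cx + cy - cx * cy) * x * y)^2) :=
        (Real.sqrt_sq_eq_abs _).symm
    _ ≤ Real.sqrt ((5 + cx) * (2 + cx) * (5 + cy) * (2 + cy)) :=
        Real.sqrt_le_sqrt hnum
end

section
/- The function R(θx,θy) = 2(8 + cos θx + cos θy − cos θx cos θy) cos(θx/2) cos(θy/2) / √((5+cos θx)(2+cos θx)(5+cos θy)(2+cos θy)) attains the value 1 at (θx,θy) = (0,0) and (2π,2π), and the value −1 at (0,2π) and (2π,0); these are respectively its global maximum and minimum. -/
lemma keyQ (s t : ℝ) (hs : 0 ≤ s) (hs' : s ≤ 2) (ht : 0 ≤ t) (ht' : t ≤ 2) :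
    0 ≤ 108 - 45*(s+t) + 15*s*t + 2*s*t*(s+t) - s^2*t^2 := by
  nlinarith [mul_nonneg (sub_nonneg.2 hs') (sub_nonneg.2 ht'), mul_nonneg hs ht,
    mul_nonneg (mul_nonneg hs ht) (sub_nonneg.2 hs'), mul_nonneg (mul_nonneg hs ht) (sub_nonneg.2 ht'),
    mul_nonneg (mul_nonneg hs ht) (mul_nonneg (sub_nonneg.2 hs') (sub_nonneg.2 ht')),
    mul_nonneg hs (sub_nonneg.2 ht'), mul_nonneg ht (sub_nonneg.2 hs')]

lemma key (a b : ℝ) (ha : -1 ≤ a) (ha' : a ≤ 1) (hb : -1 ≤ b) (hb' : b ≤ 1) :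
    (8+a+b-a*b)^2*(1+a)*(1+b) ≤ (5+a)*(2+a)*(5+b)*(2+b) := by
  have h := keyQ (1-a) (1-b) (by linarith) (by linarith) (by linarith) (by linarith)
  nlinarith [sq_nonneg (a-b), mul_nonneg (mul_nonneg (sub_nonneg.2 ha') (sub_nonneg.2 hb')) h]

lemma sqrt324 : Real.sqrt 324 = 18 := by
  rw [show (324:ℝ) = 18^2 by norm_num, Real.sqrt_sq (by norm_num)]

lemma Rfun_abs_le (x y : ℝ) : |Rfun x y| ≤ 1 := by
  set a := Real.cos x with hadef
  set b := Real.cos y with hbdef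
  have ha : -1 ≤ a := Real.neg_one_le_cos x
  have ha' : a ≤ 1 := Real.cos_le_one x
  have hb : -1 ≤ b := Real.neg_one_le_cos y
  have hb' : b ≤ 1 := Real.cos_le_one y
  have hP : (0:ℝ) < (5 + a) * (2 + a) * (5 + b) * (2 + b) :=
    mul_pos (mul_pos (mul_pos (by linarith) (by linarith)) (by linarith)) (by linarith)
  set N := 2 * (8 + a + b - a * b) * Real.cos (x / 2) * Real.cos (y / 2) with hN
  have hN2 : N ^ 2 ≤ (5 + a) * (2 + a) * (5 + b) * (2 + b) := by
    have hx : Real.cos (x/2) ^ 2 = (1 + a) / 2 := by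
      rw [Real.cos_sq, show 2 * (x/2) = x by ring, hadef]; ring
    have hy : Real.cos (y/2) ^ 2 = (1 + b) / 2 := by
      rw [Real.cos_sq, show 2 * (y/2) = y by ring, hbdef]; ring
    have : N ^ 2 = (8+a+b-a*b)^2*(1+a)*(1+b) := by
      have : N ^ 2 = 4 * (8+a+b-a*b)^2 * (Real.cos (x/2))^2 * (Real.cos (y/2))^2 := by
        rw [hN]; ring
      rw [this, hx, hy]; ring
    rw [this]
    exact key a b ha ha' hb hb'
  have hs : (0:ℝ) < Real.sqrt ((5 + a) * (2 + a) * (5 + b) * (2 + b)) :=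
    Real.sqrt_pos.2 hP
  have hNle : |N| ≤ Real.sqrt ((5 + a) * (2 + a) * (5 + b) * (2 + b)) := by
    rw [← Real.sqrt_sq_eq_abs]
    exact Real.sqrt_le_sqrt hN2
  have : Rfun x y = N / Real.sqrt ((5 + a) * (2 + a) * (5 + b) * (2 + b)) := rfl
  rw [this, abs_div, abs_of_pos hs, div_le_one hs]
  exact hNle

theorem Rfun_extrema :
    Rfun 0 0 = 1 ∧ Rfun (2 * Real.pi) (2 * Real.pi) = 1 ∧
    Rfun 0 (2 * Real.pi) = -1 ∧ Rfun (2 * Real.pi) 0 = -1 ∧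
    ∀ θx ∈ Set.Ioo (-Real.pi) (3 * Real.pi), ∀ θy ∈ Set.Ioo (-Real.pi) (3 * Real.pi),
      -1 ≤ Rfun θx θy ∧ Rfun θx θy ≤ 1 := by
  have h2 : (2 * Real.pi) / 2 = Real.pi := by ring
  refine ⟨?_, ?_, ?_, ?_, ?_⟩
  · simp only [Rfun, Real.cos_zero, zero_div]
    norm_num [sqrt324]
  · simp only [Rfun, Real.cos_two_pi, h2, Real.cos_pi]
    norm_num [sqrt324]
  · simp only [Rfun, Real.cos_two_pi, Real.cos_zero, zero_div, h2, Real.cos_pi]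
    norm_num [sqrt324]
  · simp only [Rfun, Real.cos_two_pi, Real.cos_zero, zero_div, h2, Real.cos_pi]
    norm_num [sqrt324]
  · intro θx _ θy _
    exact abs_le.1 (Rfun_abs_le θx θy)
end

section
/- Let α₁ > 0, α₂ > 0, β be reals with β² < 4α₁α₂ and let h > 0, k > 0. Then for all real θx, θy, F_R(θx,θy) := (α₁/h²)[4(1−cos θx) − 3 sin²θx/(2+cos θx)] + (α₂/k²)[4(1−cos θy) − 3 sin²θy/(2+cos θy)] + (β/(hk)) sin θx sin θy [3/(2+cos θx) + 3/(2+cos θy) − 1] ≥ 0. -/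
lemma key_ineq (a b : ℝ) (ha1 : 1 ≤ a) (ha2 : a ≤ 3) (hb1 : 1 ≤ b) (hb2 : b ≤ 3) :
    (a-1)*(b-1)*(3*a+3*b-a*b)^2 ≤ a*b*(a+3)*(b+3) := by
  have hp : 0 ≤ (3-a)*(3-b) := mul_nonneg (by linarith) (by linarith)
  have h4 : (3-a)*(3-b) ≤ 4 := by nlinarith
  have t1 : 0 ≤ (3-a)*(3-b) * (36 - 7*((3-a)*(3-b))) := mul_nonneg hp (by linarith)
  have t2 : 0 ≤ (3-a)*(3-b) * ((45 - 2*((3-a)*(3-b))) * ((a-1)*(b-1))) :=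
    mul_nonneg hp (mul_nonneg (by linarith) (mul_nonneg (by linarith) (by linarith)))
  nlinarith [sq_nonneg (a-b), t1, t2]

lemma aux_quad (u v w : ℝ) (hu : 0 ≤ u) (hv : 0 ≤ v) (hw2 : w^2 ≤ 4*(u*v)) :
    0 ≤ u + v + w := by
  nlinarith [sq_nonneg (u - v), sq_nonneg (u + v + w)]

set_option maxHeartbeats 1000000 in
theorem FR_nonneg (α₁ α₂ β h k : ℝ) (h1 : α₁ > 0) (h2 : α₂ > 0)
    (h3 : β ^ 2 < 4 * α₁ * α₂) (hh : h > 0) (hk : k > 0) :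
    ∀ θx θy : ℝ,
      (α₁ / h ^ 2) * (4 * (1 - Real.cos θx) - 3 * Real.sin θx ^ 2 / (2 + Real.cos θx)) +
      (α₂ / k ^ 2) * (4 * (1 - Real.cos θy) - 3 * Real.sin θy ^ 2 / (2 + Real.cos θy)) +
      (β / (h * k)) * Real.sin θx * Real.sin θy *
        (3 / (2 + Real.cos θx) + 3 / (2 + Real.cos θy) - 1) ≥ 0 := by
  intro θx θy
  set cx := Real.cos θx with hcxd
  set sx := Real.sin θx with hsxd
  set cy := Real.cos θy with hcyd
  set sy := Real.sin θy with hsyd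
  have hcx1 : -1 ≤ cx := Real.neg_one_le_cos θx
  have hcx2 : cx ≤ 1 := Real.cos_le_one θx
  have hcy1 : -1 ≤ cy := Real.neg_one_le_cos θy
  have hcy2 : cy ≤ 1 := Real.cos_le_one θy
  have hsx : sx ^ 2 = 1 - cx ^ 2 := Real.sin_sq θx
  have hsy : sy ^ 2 = 1 - cy ^ 2 := Real.sin_sq θy
  have hdx : (0:ℝ) < 2 + cx := by linarith
  have hdy : (0:ℝ) < 2 + cy := by linarith
  set m := 3*(2+cy) + 3*(2+cx) - (2+cx)*(2+cy) with hmd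
  set u := α₁ * k^2 * (4*(1-cx)*(2+cx) - 3*sx^2) * (2+cy) with hud
  set v := α₂ * h^2 * (4*(1-cy)*(2+cy) - 3*sy^2) * (2+cx) with hvd
  set w := β * (h*k) * (sx * sy) * m with hwd
  have hu' : u = α₁ * k^2 * ((1-cx)*(5+cx)) * (2+cy) := by
    rw [hud]; linear_combination (-3*α₁*k^2*(2+cy)) * hsx
  have hv' : v = α₂ * h^2 * ((1-cy)*(5+cy)) * (2+cx) := by
    rw [hvd]; linear_combination (-3*α₂*h^2*(2+cx)) * hsy
  have hu : 0 ≤ u := by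
    rw [hu']
    apply mul_nonneg (mul_nonneg (mul_nonneg (le_of_lt h1) (by positivity)) _) (le_of_lt hdy)
    exact mul_nonneg (by linarith) (by linarith)
  have hv : 0 ≤ v := by
    rw [hv']
    apply mul_nonneg (mul_nonneg (mul_nonneg (le_of_lt h2) (by positivity)) _) (le_of_lt hdx)
    exact mul_nonneg (by linarith) (by linarith)
  have hβ : β^2 ≤ 4*(α₁*α₂) := by nlinarith
  have hkey : (1+cx)*(1+cy)*m^2 ≤ ((2+cx)*(2+cy))*((5+cx)*(5+cy)) := by
    have hk2 := key_ineq (2+cx) (2+cy) (by linarith) (by linarith) (by linarith) (by linarith)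
    calc (1+cx)*(1+cy)*m^2
        = ((2+cx)-1)*((2+cy)-1)*(3*(2+cx)+3*(2+cy)-(2+cx)*(2+cy))^2 := by rw [hmd]; ring
      _ ≤ (2+cx)*(2+cy)*((2+cx)+3)*((2+cy)+3) := hk2
      _ = ((2+cx)*(2+cy))*((5+cx)*(5+cy)) := by ring
  have hnn : 0 ≤ h^2*k^2*((1-cx)*(1-cy)) := by
    apply mul_nonneg (by positivity) (mul_nonneg (by linarith) (by linarith))
  have e1 : w^2 = (h^2*k^2*((1-cx)*(1-cy))) * (β^2 * ((1+cx)*(1+cy)*m^2)) := by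
    rw [hwd]
    linear_combination (β^2*h^2*k^2*m^2*sy^2) * hsx + (β^2*h^2*k^2*m^2*(1-cx^2)) * hsy
  have e2 : 4*(u*v) = (h^2*k^2*((1-cx)*(1-cy))) *
      ((4*(α₁*α₂)) * (((2+cx)*(2+cy))*((5+cx)*(5+cy)))) := by
    rw [hu', hv']; ring
  have hm1 : 0 ≤ (1+cx)*(1+cy)*m^2 :=
    mul_nonneg (mul_nonneg (by linarith) (by linarith)) (sq_nonneg m)
  have hw2 : w^2 ≤ 4*(u*v) := by
    rw [e1, e2]
    refine mul_le_mul_of_nonneg_left ?_ hnn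
    calc β^2 * ((1+cx)*(1+cy)*m^2)
        ≤ (4*(α₁*α₂)) * ((1+cx)*(1+cy)*m^2) := mul_le_mul_of_nonneg_right hβ hm1
      _ ≤ (4*(α₁*α₂)) * (((2+cx)*(2+cy))*((5+cx)*(5+cy))) :=
          mul_le_mul_of_nonneg_left hkey (by positivity)
  have hfinal : 0 ≤ u + v + w := aux_quad u v w hu hv hw2
  have heq : (α₁ / h ^ 2) * (4 * (1 - cx) - 3 * sx ^ 2 / (2 + cx)) +
      (α₂ / k ^ 2) * (4 * (1 - cy) - 3 * sy ^ 2 / (2 + cy)) +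
      (β / (h * k)) * sx * sy * (3 / (2 + cx) + 3 / (2 + cy) - 1)
      = (u + v + w) / (h^2 * k^2 * ((2+cx)*(2+cy))) := by
    rw [hud, hvd, hwd, hmd]
    field_simp
  rw [ge_iff_le, heq]
  exact div_nonneg hfinal (by positivity)
end

section
/- Let z = a + bi with a ≥ 0, b ∈ ℝ, δt > 0 and 1/2 ≤ ι ≤ 1. Then (1 − (1−ι)δt·a)² + (1−ι)²δt²b² ≤ (1 + ιδt·a)² + ι²δt²b², i.e., |1 − (1−ι)δt z| ≤ |1 + ιδt z|. -/
/-!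
With w = δt·z, the gap between the two squared moduli is exactly
|1 + ιw|² − |1 − (1−ι)w|² = 2 Re w + (2ι − 1)|w|²,
and both terms are nonnegative when Re w ≥ 0 and ι ≥ 1/2.
-/

open Complex

theorem Complex.normSq_one_add_sub_normSq_one_sub (θ : ℝ) (w : ℂ) :
    normSq (1 + θ * w) - normSq (1 - (1 - θ) * w) = 2 * w.re + (2 * θ - 1) * normSq w := by
  simp only [normSq_apply, add_re, add_im, sub_re, sub_im, mul_re, mul_im, one_re, one_im,
    ofReal_re, ofReal_im]
  ring

theorem Complex.normSq_one_sub_le_normSq_one_add {θ : ℝ} (hθ : 1 / 2 ≤ θ) {w : ℂ}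
    (hw : 0 ≤ w.re) : normSq (1 - (1 - θ) * w) ≤ normSq (1 + θ * w) := by
  have := normSq_one_add_sub_normSq_one_sub θ w
  nlinarith [normSq_nonneg w]

theorem Complex.norm_one_sub_le_norm_one_add {θ : ℝ} (hθ : 1 / 2 ≤ θ) {w : ℂ}
    (hw : 0 ≤ w.re) : ‖1 - (1 - θ) * w‖ ≤ ‖1 + θ * w‖ := by
  rw [norm_def, norm_def]
  exact Real.sqrt_le_sqrt (normSq_one_sub_le_normSq_one_add hθ hw)

theorem key_stability_inequality_general (a b δt ι : ℝ) (ha : a ≥ 0) (hδt : δt > 0)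
    (hι1 : (1:ℝ)/2 ≤ ι) :
    (1 - (1 - ι) * δt * a) ^ 2 + (1 - ι) ^ 2 * δt ^ 2 * b ^ 2 ≤
      (1 + ι * δt * a) ^ 2 + ι ^ 2 * δt ^ 2 * b ^ 2 ∧
    ‖(1 - ((1 - ι) * δt : ℝ) * ((a : ℝ) + (b : ℝ) * Complex.I) : ℂ)‖ ≤
      ‖(1 + (ι * δt : ℝ) * ((a : ℝ) + (b : ℝ) * Complex.I) : ℂ)‖ := by
  set w : ℂ := δt * (a + b * I)
  have hw : 0 ≤ w.re := by simpa [w] using mul_nonneg hδt.le ha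
  refine ⟨?_, ?_⟩
  · convert normSq_one_sub_le_normSq_one_add hι1 hw using 1 <;>
      simp [w, normSq_apply] <;> ring
  · convert norm_one_sub_le_norm_one_add hι1 hw using 3 <;> push_cast <;> ring

theorem key_stability_inequality (a b δt ι : ℝ) (ha : a ≥ 0) (hδt : δt > 0)
    (hι1 : (1:ℝ)/2 ≤ ι) (hι2 : ι ≤ 1) :
    (1 - (1 - ι) * δt * a) ^ 2 + (1 - ι) ^ 2 * δt ^ 2 * b ^ 2 ≤
      (1 + ι * δt * a) ^ 2 + ι ^ 2 * δt ^ 2 * b ^ 2 ∧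
    ‖(1 - ((1 - ι) * δt : ℝ) * ((a : ℝ) + (b : ℝ) * Complex.I) : ℂ)‖ ≤
      ‖(1 + (ι * δt : ℝ) * ((a : ℝ) + (b : ℝ) * Complex.I) : ℂ)‖ :=
  key_stability_inequality_general a b δt ι ha hδt hι1
end

section
/- The modified wavenumber of the fourth-order compact mixed-derivative approximation, λ_{4OC-M}(κ₁h, κ₂k) = −(sin(κ₁h) sin(κ₂k)/(hk))[3/(2+cos(κ₁h)) + 3/(2+cos(κ₂k)) − 1], agrees with the exact characteristic λ_Exact = −κ₁κ₂ up to fourth order: λ_{4OC-M} = −κ₁κ₂ + O(h⁴ + k⁴ + h²k²) as h, k → 0 for fixed κ₁, κ₂. -/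
/-!
Write `a = κ₁ h`, `b = κ₂ k`. The compact weight `3 / (2 + cos a)` is the Padé approximant of
`a / sin a`: the residual `3 sin a - a (2 + cos a)` vanishes identically once `sin` and `cos` are
replaced by their cubic Taylor polynomials, so it is `O(a⁵)`. Hence
`sin a sin b (3/(2 + cos a) + 3/(2 + cos b) - 1)` differs from `a b` by
`(a - sin a)(b - sin b) = O(a³b³)` and two residual terms `O(a⁵ b)`, `O(a b⁵)`; dividing by `h k`
leaves `O(h²k² + h⁴ + k⁴)`.
-/

open Filter Topology Asymptotics

namespace Real

lemma one_le_two_add_cos (x : ℝ) : 1 ≤ 2 + cos x := by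
  linarith [neg_one_le_cos x]

lemma two_add_cos_pos (x : ℝ) : 0 < 2 + cos x :=
  one_pos.trans_le (one_le_two_add_cos x)

lemma abs_three_mul_sin_sub_mul_two_add_cos_le {x : ℝ} (hx : |x| ≤ 1) :
    |3 * sin x - x * (2 + cos x)| ≤ |x| ^ 5 := by
  have hs := sin_bound hx
  have hc := cos_bound hx
  have hx5 : 0 ≤ |x| ^ 5 := by positivity
  calc |3 * sin x - x * (2 + cos x)|
        = |3 * (sin x - (x - x ^ 3 / 6)) - x * (cos x - (1 - x ^ 2 / 2))| := by ring_nf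
    _ ≤ 3 * |sin x - (x - x ^ 3 / 6)| + |x| * |cos x - (1 - x ^ 2 / 2)| := by
        grw [abs_sub, abs_mul, abs_mul, abs_of_pos three_pos]
    _ ≤ 3 * (|x| ^ 5 / 100) + |x| * (|x| ^ 4 * (5 / 96)) := by gcongr
    _ ≤ |x| ^ 5 := by ring_nf; linarith

lemma sin_mul_sin_mul_compact_weight_eq (a b : ℝ) :
    sin a * sin b * (3 / (2 + cos a) + 3 / (2 + cos b) - 1) =
      a * b - (a - sin a) * (b - sin b) + sin b * (3 * sin a - a * (2 + cos a)) / (2 + cos a) +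
        sin a * (3 * sin b - b * (2 + cos b)) / (2 + cos b) := by
  have ha := (two_add_cos_pos a).ne'
  have hb := (two_add_cos_pos b).ne'
  field_simp
  ring

lemma abs_sin_mul_residual_div_le {a b : ℝ} (ha : |a| ≤ 1) :
    |sin b * (3 * sin a - a * (2 + cos a)) / (2 + cos a)| ≤ |a| ^ 5 * |b| := by
  rw [abs_div, abs_mul, abs_of_pos (two_add_cos_pos a), mul_comm (|a| ^ 5)]
  calc |sin b| * |3 * sin a - a * (2 + cos a)| / (2 + cos a)
      ≤ |sin b| * |3 * sin a - a * (2 + cos a)| := div_le_self (by positivity) (one_le_two_add_cos a)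
    _ ≤ |b| * |a| ^ 5 := by grw [abs_sin_le_abs, abs_three_mul_sin_sub_mul_two_add_cos_le ha]

lemma abs_sin_mul_sin_mul_compact_weight_sub_mul_le {a b : ℝ} (ha : |a| ≤ 1) (hb : |b| ≤ 1) :
    |sin a * sin b * (3 / (2 + cos a) + 3 / (2 + cos b) - 1) - a * b| ≤
      |a| ^ 3 * |b| ^ 3 + |a| ^ 5 * |b| + |a| * |b| ^ 5 := by
  have hcubic : |(a - sin a) * (b - sin b)| ≤ |a| ^ 3 * |b| ^ 3 := by
    grw [abs_mul, abs_sub_sin_le, abs_sub_sin_le]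
    linarith [mul_nonneg (pow_nonneg (abs_nonneg a) 3) (pow_nonneg (abs_nonneg b) 3)]
  have hres_a := abs_sin_mul_residual_div_le (b := b) ha
  have hres_b := abs_sin_mul_residual_div_le (b := a) hb
  rw [sin_mul_sin_mul_compact_weight_eq, mul_comm (|a|) (|b| ^ 5)]
  calc _ = |-((a - sin a) * (b - sin b)) + sin b * (3 * sin a - a * (2 + cos a)) / (2 + cos a) +
          sin a * (3 * sin b - b * (2 + cos b)) / (2 + cos b)| := by ring_nf
    _ ≤ _ := by grw [abs_add_le, abs_add_le, abs_neg, hcubic, hres_a, hres_b]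

end Real

lemma abs_compact_mixed_symbol_sub_le {κ₁ κ₂ x y : ℝ} (hx : x ≠ 0) (hy : y ≠ 0)
    (ha : |κ₁ * x| ≤ 1) (hb : |κ₂ * y| ≤ 1) :
    |-(Real.sin (κ₁ * x) * Real.sin (κ₂ * y) / (x * y)) *
          (3 / (2 + Real.cos (κ₁ * x)) + 3 / (2 + Real.cos (κ₂ * y)) - 1) - (-(κ₁ * κ₂))| ≤
      (|κ₁| ^ 3 * |κ₂| ^ 3 + |κ₁| ^ 5 * |κ₂| + |κ₁| * |κ₂| ^ 5) * (x ^ 4 + y ^ 4 + x ^ 2 * y ^ 2) := by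
  have key := Real.abs_sin_mul_sin_mul_compact_weight_sub_mul_le ha hb
  have hxy : 0 < |x| * |y| := by positivity
  have hdiv : -(Real.sin (κ₁ * x) * Real.sin (κ₂ * y) / (x * y)) *
        (3 / (2 + Real.cos (κ₁ * x)) + 3 / (2 + Real.cos (κ₂ * y)) - 1) - (-(κ₁ * κ₂)) =
      -(Real.sin (κ₁ * x) * Real.sin (κ₂ * y) *
          (3 / (2 + Real.cos (κ₁ * x)) + 3 / (2 + Real.cos (κ₂ * y)) - 1) - κ₁ * x * (κ₂ * y)) /
        (x * y) := by
    field_simp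
    ring
  rw [hdiv, abs_div, abs_neg, abs_mul x, div_le_iff₀ hxy]
  grw [key]
  rw [abs_mul, abs_mul, ← Even.pow_abs ⟨2, rfl⟩ x, ← Even.pow_abs ⟨2, rfl⟩ y, ← sq_abs x, ← sq_abs y]
  apply sub_nonneg.mp
  ring_nf
  positivity

theorem compact_mixed_symbol_fourth_order (κ₁ κ₂ : ℝ) :
    (fun p : ℝ × ℝ =>
        -(Real.sin (κ₁ * p.1) * Real.sin (κ₂ * p.2) / (p.1 * p.2)) *
            (3 / (2 + Real.cos (κ₁ * p.1)) + 3 / (2 + Real.cos (κ₂ * p.2)) - 1) -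
          (-(κ₁ * κ₂)))
      =O[𝓝[Set.Ioi (0:ℝ) ×ˢ Set.Ioi (0:ℝ)] (0, 0)]
      (fun p : ℝ × ℝ => p.1 ^ 4 + p.2 ^ 4 + p.1 ^ 2 * p.2 ^ 2) := by
  refine IsBigO.of_bound (|κ₁| ^ 3 * |κ₂| ^ 3 + |κ₁| ^ 5 * |κ₂| + |κ₁| * |κ₂| ^ 5) ?_
  have ha : ∀ᶠ p : ℝ × ℝ in 𝓝 (0, 0), |κ₁ * p.1| ≤ 1 :=
    ((continuous_const.mul continuous_fst).abs.tendsto' (0, 0) 0 (by simp)).eventually_le_const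
      one_pos
  have hb : ∀ᶠ p : ℝ × ℝ in 𝓝 (0, 0), |κ₂ * p.2| ≤ 1 :=
    ((continuous_const.mul continuous_snd).abs.tendsto' (0, 0) 0 (by simp)).eventually_le_const
      one_pos
  filter_upwards [nhdsWithin_le_nhds ha, nhdsWithin_le_nhds hb, self_mem_nhdsWithin]
    with p hpa hpb ⟨hx, hy⟩
  rw [Real.norm_eq_abs, Real.norm_of_nonneg (by positivity)]
  exact abs_compact_mixed_symbol_sub_le (ne_of_gt hx) (ne_of_gt hy) hpa hpb
end
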